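/- For every N ≥ 2 and every x = (x₁,…,x_N) ∈ D, the Euclidean gradient of H at x satisfies |∇H(x)|² ≥ (4/N²)|x|² + (4/N⁴) ∑_{i≠j} 1/|x_i − x_j|² − 4(N−1)/N², where |x|² := ∑_{i=1}^N |x_i|². In particular |∇H(x)| → +∞ as x approaches the boundary ∂D. -/

import Mathlib

/-! Write `y i ∈ ℝ²` for the `i`-th point and `F i = ∑_{j ≠ i} (y i - y j) / |y i - y j|²`.
Then `∇H` has blocks `(2/N) y i - (2/N²) F i`, so
`|∇H|² = (4/N²) ∑ |y i|² - (8/N³) ∑ ⟪F i, y i⟫ + (4/N⁴) ∑ |F i|²`.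
By antisymmetry of the pair forces,
`2 ∑ ⟪F i, y i⟫ = ∑_{i ≠ j} ⟪(y i - y j) / |y i - y j|², y i - y j⟫ = N(N - 1)`.
Expanding `|F i|²` gives `∑_{i ≠ j} 1/|y i - y j|²` plus a sum over triples of distinct indices;
symmetrised over each triangle `a, b, c` with `u = a - b`, `v = a - c`, its terms add up to
`2(|u|²|v|² - ⟪u, v⟫²) / (|u|²|v|²|u - v|²) ≥ 0` by Cauchy–Schwarz. The argument never uses that
the points lie in the plane. -/

open Finset

/-- Configuration space: `N` pairwise distinct points, ambient space
`EuclideanSpace ℝ (Fin N × Fin 2) ≅ (ℝ²)^N` with Euclidean norm. -/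
def Dconf (N : ℕ) : Set (EuclideanSpace ℝ (Fin N × Fin 2)) :=
  {x | ∀ i j : Fin N, i ≠ j → (fun k => x (i, k)) ≠ (fun k => x (j, k))}

/-- The energy `H(x) = (1/N)∑ᵢ |xᵢ|² + (1/(2N²))∑_{i≠j} log(1/|xᵢ-xⱼ|²)`. -/
noncomputable def Henergy (N : ℕ) (x : EuclideanSpace ℝ (Fin N × Fin 2)) : ℝ :=
  (1 / N) * ∑ i : Fin N, (∑ k : Fin 2, (x (i, k)) ^ 2)
    + (1 / (2 * N ^ 2)) * ∑ i : Fin N, ∑ j : Fin N,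
        if i ≠ j then Real.log (1 / ∑ k : Fin 2, (x (i, k) - x (j, k)) ^ 2) else 0

open InnerProductSpace

namespace LogGas

variable {F : Type*} [NormedAddCommGroup F] [InnerProductSpace ℝ F]

noncomputable def pairForce (a b : F) : F := (‖a - b‖ ^ 2)⁻¹ • (a - b)

@[simp] lemma pairForce_self (a : F) : pairForce a a = 0 := by simp [pairForce]

lemma pairForce_swap (a b : F) : pairForce b a = -pairForce a b := by
  rw [pairForce, pairForce, norm_sub_rev, ← smul_neg, neg_sub]

lemma inner_pairForce_sub {a b : F} (h : a ≠ b) : ⟪pairForce a b, a - b⟫_ℝ = 1 := by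
  rw [pairForce, real_inner_smul_left, real_inner_self_eq_norm_sq]
  exact inv_mul_cancel₀ (by simpa [sub_eq_zero] using h)

lemma norm_pairForce_sq (a b : F) : ‖pairForce a b‖ ^ 2 = (‖a - b‖ ^ 2)⁻¹ := by
  rw [pairForce, norm_smul, norm_inv, norm_pow, norm_norm, mul_pow]
  rcases eq_or_ne ‖a - b‖ 0 with h | h
  · simp [h]
  · field_simp

lemma triangle_sum_nonneg {P Q R m : ℝ} (hP : 0 < P) (hQ : 0 < Q) (hR : 0 < R)
    (hPQR : R = P + Q - 2 * m) (hm : m ^ 2 ≤ P * Q) :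
    0 ≤ m / (P * Q) + (P - m) / (P * R) + (Q - m) / (Q * R) := by
  have h : m / (P * Q) + (P - m) / (P * R) + (Q - m) / (Q * R)
      = 2 * (P * Q - m ^ 2) / (P * Q * R) := by
    field_simp
    rw [hPQR]
    ring
  rw [h]
  have := sub_nonneg.2 hm
  positivity

lemma inner_pairForce_cyclic_nonneg {a b c : F} (hab : a ≠ b) (hac : a ≠ c) (hbc : b ≠ c) :
    0 ≤ ⟪pairForce a b, pairForce a c⟫_ℝ + ⟪pairForce b a, pairForce b c⟫_ℝ
      + ⟪pairForce c a, pairForce c b⟫_ℝ := by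
  obtain ⟨u, rfl⟩ : ∃ u, b = a - u := ⟨a - b, (sub_sub_cancel a b).symm⟩
  obtain ⟨v, rfl⟩ : ∃ v, c = a - v := ⟨a - c, (sub_sub_cancel a c).symm⟩
  have hu : 0 < ‖u‖ := by rw [norm_pos_iff]; rintro rfl; simp at hab
  have hv : 0 < ‖v‖ := by rw [norm_pos_iff]; rintro rfl; simp at hac
  have huv : 0 < ‖u - v‖ := by rw [norm_pos_iff, sub_ne_zero]; rintro rfl; exact hbc rfl
  have hR : ‖u - v‖ ^ 2 = ‖u‖ ^ 2 + ‖v‖ ^ 2 - 2 * ⟪u, v⟫_ℝ := by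
    rw [norm_sub_sq_real]
    ring
  have hm : ⟪u, v⟫_ℝ ^ 2 ≤ ‖u‖ ^ 2 * ‖v‖ ^ 2 := by
    rw [← mul_pow, ← sq_abs]
    exact pow_le_pow_left₀ (abs_nonneg _) (abs_real_inner_le_norm u v) 2
  have key := triangle_sum_nonneg (pow_pos hu 2) (pow_pos hv 2) (pow_pos huv 2) hR hm
  simp only [pairForce, sub_sub_cancel, sub_sub_sub_cancel_left, sub_sub_cancel_left, norm_neg,
    real_inner_smul_left, real_inner_smul_right, inner_neg_left, inner_sub_right,
    real_inner_self_eq_norm_sq]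
  rw [norm_sub_rev v u, real_inner_comm u v]
  convert key using 1
  ring

variable {ι : Type*} [Fintype ι]

/-- The `j = i` term vanishes, so this is the sum over `j ≠ i`. -/
noncomputable def force (y : ι → F) (i : ι) : F := ∑ j, pairForce (y i) (y j)

lemma two_mul_sum_inner_sum_of_antisymm (w : ι → ι → F) (hw : ∀ i j, w j i = -w i j)
    (v : ι → F) : 2 * ∑ i, ⟪∑ j, w i j, v i⟫_ℝ = ∑ i, ∑ j, ⟪w i j, v i - v j⟫_ℝ := by
  have hswap : ∑ i, ∑ j, ⟪w i j, v j⟫_ℝ = -∑ i, ∑ j, ⟪w i j, v i⟫_ℝ := by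
    rw [Finset.sum_comm, ← Finset.sum_neg_distrib]
    refine Finset.sum_congr rfl fun i _ => ?_
    rw [← Finset.sum_neg_distrib]
    exact Finset.sum_congr rfl fun j _ => by rw [hw i j, inner_neg_left]
  simp only [sum_inner, inner_sub_right, Finset.sum_sub_distrib, hswap]
  ring

lemma two_mul_sum_inner_force {y : ι → F} (hy : Function.Injective y) :
    2 * ∑ i, ⟪force y i, y i⟫_ℝ = Fintype.card ι * (Fintype.card ι - 1) := by
  classical
  have hpair : ∀ i j, ⟪pairForce (y i) (y j), y i - y j⟫_ℝ = 1 - if i = j then 1 else 0 := by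
    intro i j
    split_ifs with h
    · simp [h]
    · rw [inner_pairForce_sub (hy.ne h), sub_zero]
  unfold force
  rw [two_mul_sum_inner_sum_of_antisymm _ fun i j => pairForce_swap (y i) (y j)]
  simp only [hpair, Finset.sum_sub_distrib, Finset.sum_ite_eq, Finset.mem_univ, if_true,
    Finset.sum_const, Finset.card_univ, nsmul_eq_mul, mul_one]
  ring

lemma sum_sum_sum_nonneg_of_cyclic {G : ι → ι → ι → ℝ}
    (hG : ∀ i j l, 0 ≤ G i j l + G j i l + G l i j) : 0 ≤ ∑ i, ∑ j, ∑ l, G i j l := by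
  have h1 : ∑ i, ∑ j, ∑ l, G j i l = ∑ i, ∑ j, ∑ l, G i j l := Finset.sum_comm
  have h2 : ∑ i, ∑ j, ∑ l, G l i j = ∑ i, ∑ j, ∑ l, G i j l := by
    rw [Finset.sum_congr rfl fun _ _ => Finset.sum_comm, Finset.sum_comm]
  have := Finset.sum_nonneg fun i (_ : i ∈ Finset.univ) => Finset.sum_nonneg
    fun j (_ : j ∈ Finset.univ) => Finset.sum_nonneg fun l (_ : l ∈ Finset.univ) => hG i j l
  simp only [Finset.sum_add_distrib, h1, h2] at this
  linarith

lemma sum_inv_norm_sub_sq_le_sum_norm_sq_force {y : ι → F} (hy : Function.Injective y) :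
    ∑ i, ∑ j, (‖y i - y j‖ ^ 2)⁻¹ ≤ ∑ i, ‖force y i‖ ^ 2 := by
  classical
  set t : ι → ι → ι → ℝ := fun i j l =>
    if j = l then 0 else ⟪pairForce (y i) (y j), pairForce (y i) (y l)⟫_ℝ with ht
  have hsplit : ∀ i, ‖force y i‖ ^ 2 = ∑ j, (‖y i - y j‖ ^ 2)⁻¹ + ∑ j, ∑ l, t i j l := by
    intro i
    have hdiag : ∀ j l, ⟪pairForce (y i) (y j), pairForce (y i) (y l)⟫_ℝ
        = (if j = l then ‖pairForce (y i) (y j)‖ ^ 2 else 0) + t i j l := by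
      intro j l
      by_cases h : j = l <;> simp [ht, h]
    rw [← real_inner_self_eq_norm_sq, force, sum_inner]
    simp only [inner_sum, hdiag, Finset.sum_add_distrib, Finset.sum_ite_eq, Finset.mem_univ,
      if_true, norm_pairForce_sq]
  have ht_nonneg : 0 ≤ ∑ i, ∑ j, ∑ l, t i j l := by
    refine sum_sum_sum_nonneg_of_cyclic fun i j l => ?_
    by_cases hij : i = j
    · subst hij; simp [ht]
    by_cases hil : i = l
    · subst hil; simp [ht]
    by_cases hjl : j = l
    · subst hjl; simp [ht]
    simpa [ht, hij, hil, hjl, Ne.symm hij, Ne.symm hil, Ne.symm hjl] using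
      inner_pairForce_cyclic_nonneg (hy.ne hij) (hy.ne hil) (hy.ne hjl)
  simp only [hsplit, Finset.sum_add_distrib]
  linarith

noncomputable def energyGradient (y : PiLp 2 fun _ : ι => F) : PiLp 2 fun _ : ι => F :=
  WithLp.toLp 2 fun i => (2 / Fintype.card ι : ℝ) • y i - (2 / Fintype.card ι ^ 2 : ℝ) • force y i

lemma le_norm_sq_energyGradient {y : PiLp 2 fun _ : ι => F} (hy : Function.Injective y) :
    (4 / (Fintype.card ι : ℝ) ^ 2) * ∑ i, ‖y i‖ ^ 2
      + (4 / (Fintype.card ι : ℝ) ^ 4) * ∑ i, ∑ j, (‖y i - y j‖ ^ 2)⁻¹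
      - 4 * ((Fintype.card ι : ℝ) - 1) / (Fintype.card ι : ℝ) ^ 2
    ≤ ‖energyGradient y‖ ^ 2 := by
  rw [energyGradient, PiLp.norm_sq_eq_of_L2]
  set n : ℝ := (Fintype.card ι : ℝ)
  have hexp : ∀ i, ‖(2 / n) • y i - (2 / n ^ 2) • force y i‖ ^ 2
      = 4 / n ^ 2 * ‖y i‖ ^ 2 - 8 / n ^ 3 * ⟪force y i, y i⟫_ℝ + 4 / n ^ 4 * ‖force y i‖ ^ 2 := by
    intro i
    rw [norm_sub_sq_real, norm_smul, norm_smul, real_inner_smul_left, real_inner_smul_right,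
      real_inner_comm, Real.norm_of_nonneg (by positivity), Real.norm_of_nonneg (by positivity)]
    ring
  have hcross : 8 / n ^ 3 * ∑ i, ⟪force y i, y i⟫_ℝ = 4 * (n - 1) / n ^ 2 := by
    have h2 : 2 * ∑ i, ⟪force y i, y i⟫_ℝ = n * (n - 1) := two_mul_sum_inner_force hy
    rw [show 8 / n ^ 3 * ∑ i, ⟪force y i, y i⟫_ℝ = 4 / n ^ 3 * (2 * ∑ i, ⟪force y i, y i⟫_ℝ) by
      ring, h2]
    rcases eq_or_ne n 0 with h | h
    · simp [h]
    · field_simp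
  have hforce := mul_le_mul_of_nonneg_left (sum_inv_norm_sub_sq_le_sum_norm_sq_force hy)
    (by positivity : 0 ≤ 4 / n ^ 4)
  simp only [hexp, Finset.sum_add_distrib, Finset.sum_sub_distrib, ← Finset.mul_sum, hcross]
  linarith

lemma hasFDerivAt_log_inv_norm_sub_sq {i j : ι} (y : PiLp 2 fun _ : ι => F) (h : y i ≠ y j) :
    HasFDerivAt (fun z : PiLp 2 (fun _ : ι => F) => Real.log (1 / ‖z i - z j‖ ^ 2))
      (-(2 • (innerSL ℝ (pairForce (y i) (y j))).comp
        (PiLp.proj (𝕜 := ℝ) 2 (fun _ : ι => F) i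
          - PiLp.proj (𝕜 := ℝ) 2 (fun _ : ι => F) j))) y := by
  have hd := ((PiLp.proj (𝕜 := ℝ) 2 (fun _ : ι => F) i
    - PiLp.proj (𝕜 := ℝ) 2 (fun _ : ι => F) j).hasFDerivAt (x := y)).norm_sq
  simp only [one_div, Real.log_inv]
  refine (hd.log (by simpa [sub_eq_zero] using h)).neg.congr_fderiv ?_
  rw [pairForce, map_smul, ContinuousLinearMap.smul_comp, smul_comm]
  rfl

variable [DecidableEq ι]

noncomputable def energy (y : PiLp 2 fun _ : ι => F) : ℝ :=
  (1 / Fintype.card ι) * ∑ i, ‖y i‖ ^ 2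
    + (1 / (2 * Fintype.card ι ^ 2)) * ∑ i, ∑ j,
        if i ≠ j then Real.log (1 / ‖y i - y j‖ ^ 2) else 0

lemma hasGradientAt_energy [CompleteSpace F] {y : PiLp 2 fun _ : ι => F}
    (hy : Function.Injective y) : HasGradientAt energy (energyGradient y) y := by
  have hsq : ∀ i, HasFDerivAt (fun z : PiLp 2 (fun _ : ι => F) => ‖z i‖ ^ 2)
      (2 • (innerSL ℝ (y i)).comp (PiLp.proj (𝕜 := ℝ) 2 _ i)) y :=
    fun i => (PiLp.proj (𝕜 := ℝ) 2 _ i).hasFDerivAt.norm_sq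
  have hlog : ∀ i j, HasFDerivAt (fun z : PiLp 2 (fun _ : ι => F) =>
      if i ≠ j then Real.log (1 / ‖z i - z j‖ ^ 2) else 0)
      (-(2 • (innerSL ℝ (pairForce (y i) (y j))).comp
        (PiLp.proj (𝕜 := ℝ) 2 (fun _ : ι => F) i
          - PiLp.proj (𝕜 := ℝ) 2 (fun _ : ι => F) j))) y := by
    intro i j
    by_cases h : i = j
    · subst h
      simpa using hasFDerivAt_const (0 : ℝ) y
    · simpa only [h, ne_eq, not_false_eq_true, if_true] using
        hasFDerivAt_log_inv_norm_sub_sq y (hy.ne h)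
  rw [hasGradientAt_iff_hasFDerivAt]
  refine HasFDerivAt.congr_fderiv
    (((HasFDerivAt.fun_sum fun i _ => hsq i).const_mul _).add
      ((HasFDerivAt.fun_sum fun i _ => HasFDerivAt.fun_sum fun j _ => hlog i j).const_mul _)) ?_
  ext v
  have key := two_mul_sum_inner_sum_of_antisymm (fun i j => pairForce (y i) (y j))
    (fun i j => pairForce_swap _ _) v
  simp only [sum_inner, inner_sub_right, Finset.sum_sub_distrib] at key
  simp only [toDual_apply_apply, energyGradient, PiLp.inner_apply, force, inner_sub_left,
    real_inner_smul_left, sum_inner, add_apply, smul_apply, _root_.sum_apply, neg_apply, sub_apply,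
    ContinuousLinearMap.comp_sub, ContinuousLinearMap.comp_apply, PiLp.proj_apply,
    coe_innerSL_apply, smul_neg, smul_eq_mul, nsmul_eq_mul, Nat.cast_ofNat, one_div, mul_inv_rev,
    Finset.sum_neg_distrib, Finset.sum_sub_distrib, ← Finset.mul_sum]
  linear_combination ((Fintype.card ι : ℝ) ^ 2)⁻¹ * key

end LogGas

lemma HasGradientAt.comp_linearIsometryEquiv {E E' : Type*} [NormedAddCommGroup E]
    [InnerProductSpace ℝ E] [CompleteSpace E] [NormedAddCommGroup E'] [InnerProductSpace ℝ E']
    [CompleteSpace E'] (e : E ≃ₗᵢ[ℝ] E') {f : E' → ℝ} {g : E'} {x : E}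
    (h : HasGradientAt f g (e x)) : HasGradientAt (f ∘ e) (e.symm g) x := by
  rw [hasGradientAt_iff_hasFDerivAt] at h ⊢
  refine (h.comp x e.toContinuousLinearEquiv.hasFDerivAt).congr_fderiv ?_
  ext v
  simp [LinearIsometryEquiv.inner_map_eq_flip]

namespace EuclideanSpace

variable (ι κ : Type*) [Fintype ι] [Fintype κ]

noncomputable def curryEquiv :
    EuclideanSpace ℝ (ι × κ) ≃ₗᵢ[ℝ] PiLp 2 (fun _ : ι => EuclideanSpace ℝ κ) :=
  (LinearIsometryEquiv.piLpCongrLeft 2 ℝ ℝ (Equiv.sigmaEquivProd ι κ).symm).trans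
    (LinearIsometryEquiv.piLpCurry ℝ 2 fun _ _ => ℝ)

variable {ι κ}

@[simp] lemma curryEquiv_apply (x : EuclideanSpace ℝ (ι × κ)) (i : ι) (k : κ) :
    curryEquiv ι κ x i k = x (i, k) := rfl

end EuclideanSpace

lemma Henergy_eq_energy_comp (N : ℕ) :
    Henergy N = LogGas.energy ∘ EuclideanSpace.curryEquiv (Fin N) (Fin 2) := by
  funext x
  simp [Henergy, LogGas.energy, EuclideanSpace.real_norm_sq_eq]

lemma injective_curryEquiv_of_mem_Dconf {N : ℕ} {x : EuclideanSpace ℝ (Fin N × Fin 2)}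
    (hx : x ∈ Dconf N) : Function.Injective (EuclideanSpace.curryEquiv (Fin N) (Fin 2) x) := by
  intro i j hij
  by_contra hne
  exact hx i j hne (funext fun k => congrArg (· k) hij)

theorem stmt11_general (N : ℕ) (x : EuclideanSpace ℝ (Fin N × Fin 2))
    (hx : x ∈ Dconf N) :
    (4 / (N : ℝ) ^ 2) * (∑ i : Fin N, ∑ k : Fin 2, (x (i, k)) ^ 2)
      + (4 / (N : ℝ) ^ 4) * (∑ i : Fin N, ∑ j ∈ Finset.univ.erase i,
          (∑ k : Fin 2, (x (i, k) - x (j, k)) ^ 2)⁻¹)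
      - 4 * ((N : ℝ) - 1) / (N : ℝ) ^ 2
    ≤ ‖gradient (Henergy N) x‖ ^ 2 := by
  have hy := injective_curryEquiv_of_mem_Dconf hx
  rw [Henergy_eq_energy_comp,
    ((LogGas.hasGradientAt_energy hy).comp_linearIsometryEquiv _).gradient,
    LinearIsometryEquiv.norm_map]
  -- the `j = i` term is `0⁻¹ = 0`
  have hsum : ∀ i : Fin N, ∑ j ∈ Finset.univ.erase i, (∑ k : Fin 2, (x (i, k) - x (j, k)) ^ 2)⁻¹
      = ∑ j, (∑ k : Fin 2, (x (i, k) - x (j, k)) ^ 2)⁻¹ :=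
    fun i => Finset.sum_erase _ (by simp)
  simpa [hsum, EuclideanSpace.real_norm_sq_eq] using LogGas.le_norm_sq_energyGradient hy

/-- Gradient coercivity: on `D`,
`|∇H(x)|² ≥ (4/N²)|x|² + (4/N⁴)∑_{i≠j} 1/|xᵢ-xⱼ|² - 4(N-1)/N²`. -/
theorem stmt11 (N : ℕ) (hN : 2 ≤ N) (x : EuclideanSpace ℝ (Fin N × Fin 2))
    (hx : x ∈ Dconf N) :
    (4 / (N : ℝ) ^ 2) * (∑ i : Fin N, ∑ k : Fin 2, (x (i, k)) ^ 2)
      + (4 / (N : ℝ) ^ 4) * (∑ i : Fin N, ∑ j ∈ Finset.univ.erase i,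
          (∑ k : Fin 2, (x (i, k) - x (j, k)) ^ 2)⁻¹)
      - 4 * ((N : ℝ) - 1) / (N : ℝ) ^ 2
    ≤ ‖gradient (Henergy N) x‖ ^ 2 :=
  stmt11_general N x hx
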